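/- For any two finite sequences x and y over an alphabet Σ, and any symbol a not in Σ, and any way of interleaving arbitrary positive numbers of copies of a between, before, and after the symbols of x (yielding A(x)) and of y (yielding A(y)), the edit distance between x and y (with unit-cost insertions, deletions, substitutions) is at most the dynamic time warping distance between A(x) and A(y), where the DTWD point distance is 1 between distinct symbols and 0 between equal symbols. -/

import Mathlib

/-- Dynamic time warping distance (real-valued); the cost of the initial
configuration is counted, and degenerate empty cases give 0. -/
def dtwd {α β : Type*} (d : α → β → ℝ) : List α → List β → ℝ
  | [], _ => 0
  | _, [] => 0
  | [x], [y] => d x y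
  | [x], y :: y' :: ys => d x y + dtwd d [x] (y' :: ys)
  | x :: x' :: xs, [y] => d x y + dtwd d (x' :: xs) [y]
  | x :: x' :: xs, y :: y' :: ys =>
      d x y + min (dtwd d (x' :: xs) (y :: y' :: ys))
        (min (dtwd d (x :: x' :: xs) (y' :: ys)) (dtwd d (x' :: xs) (y' :: ys)))
  termination_by x y => x.length + y.length

/-- `pad a q r` interleaves `r i` copies of the symbol `a` before, between and
after the symbols of `q` (where `r` has length `q.length + 1`):
`a^{r₁} q₁ a^{r₂} q₂ ⋯ a^{r_p} q_p a^{r_{p+1}}`. -/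
def pad {α : Type*} (a : α) : List α → List ℕ → List α
  | q :: qs, r :: rs => List.replicate r a ++ q :: pad a qs rs
  | [], r :: _ => List.replicate r a
  | _, [] => []

namespace Levenshtein

structure Cost (α β δ : Type*) where
  delete : α → δ
  insert : β → δ
  substitute : α → β → δ

def defaultCost {α : Type*} [DecidableEq α] : Cost α α ℕ where
  delete _ := 1
  insert _ := 1
  substitute a b := if a = b then 0 else 1

def impl {α β δ : Type*} [AddZeroClass δ] [Min δ] (C : Cost α β δ) (xs : List α) (y : β)
    (d : {r : List δ // 0 < r.length}) : {r : List δ // 0 < r.length} :=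
  let ⟨ds, w⟩ := d
  xs.zip (ds.zip ds.tail) |>.foldr
    (init := ⟨[C.insert y + ds.getLast (List.ne_nil_of_length_pos w)], by simp⟩)
    (fun ⟨x, d₀, d₁⟩ ⟨r, w⟩ =>
      ⟨min (C.delete x + r[0]) (min (C.insert y + d₀) (C.substitute x y + d₁)) :: r, by simp⟩)

end Levenshtein

def suffixLevenshtein {α β δ : Type*} [AddZeroClass δ] [Min δ] (C : Levenshtein.Cost α β δ)
    (xs : List α) (ys : List β) : {r : List δ // 0 < r.length} :=
  ys.foldr
    (Levenshtein.impl C xs)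
    (xs.foldr (init := ⟨[0], by simp⟩) (fun a ⟨r, w⟩ => ⟨(C.delete a + r[0]) :: r, by simp⟩))

def levenshtein {α β δ : Type*} [AddZeroClass δ] [Min δ] (C : Levenshtein.Cost α β δ)
    (xs : List α) (ys : List β) : δ :=
  let ⟨r, _⟩ := suffixLevenshtein C xs ys
  r[0]

/-! Induct along the recursion defining `dtwd`, comparing it with the edit distance of the two
lists with every `a` erased. A cell pairing a symbol with `a` costs 1 and pays for a deletion or
an insertion; a cell pairing two symbols pays for their substitution. The delicate move keeps a
symbol `t` in place while the other list leaves the symbol `s` just paired with it: `t` is then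
already consumed by the substitution `s ↦ t`. Since symbols are separated by `a`s, the next cell
pairs `t` with `a`, and its unit cost pays for `t` however it is matched afterwards; this is the
bound `levenshtein_filter_le_dtwd_sep_left`, in which `t` is erased. -/

local notation "lev" => levenshtein Levenshtein.defaultCost

section LevenshteinRecursion

variable {α β δ : Type*} [AddZeroClass δ] [Min δ] (C : Levenshtein.Cost α β δ)

theorem suffixLevenshtein_cons₁ (x : α) (xs : List α) (ys : List β) :
    (suffixLevenshtein C (x :: xs) ys).1 =
      levenshtein C (x :: xs) ys :: (suffixLevenshtein C xs ys).1 := by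
  suffices ∃ v, (suffixLevenshtein C (x :: xs) ys).1 = v :: (suffixLevenshtein C xs ys).1 by
    obtain ⟨v, hv⟩ := this
    simp only [levenshtein, hv, List.getElem_cons_zero]
  induction ys with
  | nil => exact ⟨_, rfl⟩
  | cons y ys ih =>
    obtain ⟨v, hv⟩ := ih
    obtain ⟨d₁, ds, hd⟩ := List.exists_cons_of_ne_nil
      (List.ne_nil_of_length_pos (suffixLevenshtein C xs ys).2)
    have e₁ : suffixLevenshtein C (x :: xs) ys = ⟨v :: d₁ :: ds, by simp⟩ :=
      Subtype.ext (by rw [hv, hd])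
    have e₂ : suffixLevenshtein C xs ys = ⟨d₁ :: ds, by simp⟩ := Subtype.ext hd
    simp only [suffixLevenshtein, List.foldr_cons] at e₁ e₂ ⊢
    rw [e₁, e₂]
    exact ⟨_, rfl⟩

theorem suffixLevenshtein_cons₂ (xs : List α) (y : β) (ys : List β) :
    suffixLevenshtein C xs (y :: ys) = Levenshtein.impl C xs y (suffixLevenshtein C xs ys) := rfl

@[simp] theorem levenshtein_nil_nil : levenshtein C ([] : List α) ([] : List β) = 0 := rfl

@[simp] theorem levenshtein_cons_nil (x : α) (xs : List α) :
    levenshtein C (x :: xs) ([] : List β) = C.delete x + levenshtein C xs [] := rfl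

@[simp] theorem levenshtein_nil_cons (y : β) (ys : List β) :
    levenshtein C ([] : List α) (y :: ys) = C.insert y + levenshtein C [] ys := by
  cases ys <;> rfl

@[simp] theorem levenshtein_cons_cons (x : α) (xs : List α) (y : β) (ys : List β) :
    levenshtein C (x :: xs) (y :: ys) = min (C.delete x + levenshtein C xs (y :: ys))
      (min (C.insert y + levenshtein C (x :: xs) ys) (C.substitute x y + levenshtein C xs ys)) := by
  obtain ⟨d₁, ds, hd⟩ := List.exists_cons_of_ne_nil
    (List.ne_nil_of_length_pos (suffixLevenshtein C xs ys).2)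
  have e₁ : suffixLevenshtein C (x :: xs) ys =
      ⟨levenshtein C (x :: xs) ys :: d₁ :: ds, by simp⟩ :=
    Subtype.ext (by rw [suffixLevenshtein_cons₁, hd])
  have e₂ : suffixLevenshtein C xs ys = ⟨d₁ :: ds, by simp⟩ := Subtype.ext hd
  have h₁ : levenshtein C xs ys = d₁ := by simp only [levenshtein, hd, List.getElem_cons_zero]
  have h₂ : levenshtein C xs (y :: ys) = (Levenshtein.impl C xs y ⟨d₁ :: ds, by simp⟩).1[0]'
      (Levenshtein.impl C xs y ⟨d₁ :: ds, by simp⟩).2 := by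
    rw [levenshtein, suffixLevenshtein_cons₂, e₂]
  rw [levenshtein, suffixLevenshtein_cons₂, e₁, h₁, h₂]
  rfl

end LevenshteinRecursion

section DefaultCost

variable {α : Type*} [DecidableEq α] (s t : α) (X Y : List α)

@[simp] theorem Levenshtein.defaultCost_delete :
    (Levenshtein.defaultCost : Levenshtein.Cost α α ℕ).delete s = 1 := rfl

@[simp] theorem Levenshtein.defaultCost_insert :
    (Levenshtein.defaultCost : Levenshtein.Cost α α ℕ).insert t = 1 := rfl

@[simp] theorem Levenshtein.defaultCost_substitute :
    (Levenshtein.defaultCost : Levenshtein.Cost α α ℕ).substitute s t =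
      if s = t then 0 else 1 :=
  rfl

theorem levenshtein_cons_left_le : lev (s :: X) Y ≤ lev X Y + 1 := by
  cases Y <;> simp only [levenshtein_cons_nil, levenshtein_cons_cons,
    Levenshtein.defaultCost_delete, Levenshtein.defaultCost_insert,
    Levenshtein.defaultCost_substitute] <;> omega

theorem levenshtein_cons_right_le : lev X (t :: Y) ≤ lev X Y + 1 := by
  cases X <;> simp only [levenshtein_nil_cons, levenshtein_cons_cons,
    Levenshtein.defaultCost_delete, Levenshtein.defaultCost_insert,
    Levenshtein.defaultCost_substitute] <;> omega

theorem levenshtein_cons_cons_le : lev (s :: X) (t :: Y) ≤ lev X Y + if s = t then 0 else 1 := by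
  simp only [levenshtein_cons_cons, Levenshtein.defaultCost_delete,
    Levenshtein.defaultCost_insert, Levenshtein.defaultCost_substitute]
  omega

theorem levenshtein_le_cons_left : lev X Y ≤ lev (s :: X) Y + 1 := by
  induction Y generalizing X with
  | nil => simp only [levenshtein_cons_nil, Levenshtein.defaultCost_delete]; omega
  | cons t Y ih =>
    have := ih X
    have := levenshtein_cons_right_le t X Y
    simp only [levenshtein_cons_cons, Levenshtein.defaultCost_delete,
      Levenshtein.defaultCost_insert, Levenshtein.defaultCost_substitute]
    omega

theorem levenshtein_le_cons_right : lev X Y ≤ lev X (t :: Y) + 1 := by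
  induction X generalizing Y with
  | nil => simp only [levenshtein_nil_cons, Levenshtein.defaultCost_insert]; omega
  | cons s X ih =>
    have := ih Y
    have := levenshtein_cons_left_le s X Y
    simp only [levenshtein_cons_cons, Levenshtein.defaultCost_delete,
      Levenshtein.defaultCost_insert, Levenshtein.defaultCost_substitute]
    omega

end DefaultCost

theorem le_dtwd_cons_cons {α β : Type*} {d : α → β → ℝ} {c : ℝ} {s : α} {t : β}
    {S : List α} {T : List β} (h_nil : S = [] → T = [] → c ≤ d s t)
    (h_left : S ≠ [] → c ≤ d s t + dtwd d S (t :: T))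
    (h_right : T ≠ [] → c ≤ d s t + dtwd d (s :: S) T)
    (h_diag : S ≠ [] → T ≠ [] → c ≤ d s t + dtwd d S T) :
    c ≤ dtwd d (s :: S) (t :: T) := by
  rcases S with _ | ⟨s', S⟩ <;> rcases T with _ | ⟨t', T⟩
  · simpa [dtwd] using h_nil rfl rfl
  · rw [dtwd]; exact h_right (List.cons_ne_nil _ _)
  · rw [dtwd]; exact h_left (List.cons_ne_nil _ _)
  · rw [dtwd, ← min_add_add_left, ← min_add_add_left]
    have hS := List.cons_ne_nil s' S
    have hT := List.cons_ne_nil t' T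
    exact le_min (h_left hS) (le_min (h_right hT) (h_diag hS hT))

section Padding

variable {α : Type*} (a : α)

def SeparatedBy (S : List α) : Prop := S.IsChain fun u v => u = a ∨ v = a

theorem pad_succ (x : List α) (n : ℕ) (rs : List ℕ) :
    pad a x ((n + 1) :: rs) = a :: pad a x (n :: rs) := by
  cases x <;> simp [pad, List.replicate_succ]

theorem head?_pad {x : List α} {n : ℕ} (hn : 0 < n) (rs : List ℕ) :
    (pad a x (n :: rs)).head? = some a := by
  obtain ⟨n, rfl⟩ := Nat.exists_eq_add_one_of_ne_zero hn.ne'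
  rw [pad_succ, List.head?_cons]

theorem separatedBy_pad (x : List α) {r : List ℕ} (hr : ∀ m ∈ r, 0 < m) :
    SeparatedBy a (pad a x r) := by
  induction x generalizing r with
  | nil =>
    rcases r with _ | ⟨n, rs⟩
    · exact List.IsChain.nil
    · exact List.isChain_replicate_of_rel n (Or.inl rfl)
  | cons q qs ih =>
    rcases r with _ | ⟨n, rs⟩
    · exact List.IsChain.nil
    have hqs : ∀ y ∈ (pad a qs rs).head?, q = a ∨ y = a := by
      rcases rs with _ | ⟨m, rs⟩
      · cases qs <;> simp [pad]
      · simp [head?_pad a (hr m (by simp))]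
    refine List.isChain_append.2 ⟨List.isChain_replicate_of_rel n (Or.inl rfl),
      List.isChain_cons.2 ⟨hqs, ih fun m hm => hr m (List.mem_cons_of_mem n hm)⟩, ?_⟩
    intro u hu _ _
    exact Or.inl (List.eq_of_mem_replicate (List.mem_of_mem_getLast? hu))

theorem filter_ne_pad [DecidableEq α] {x : List α} (hax : a ∉ x) {r : List ℕ}
    (hr : r.length = x.length + 1) : (pad a x r).filter (· ≠ a) = x := by
  induction x generalizing r with
  | nil =>
    obtain ⟨n, rfl⟩ := List.length_eq_one_iff.1 hr
    simp [pad]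
  | cons q qs ih =>
    rcases r with _ | ⟨n, rs⟩
    · simp at hr
    rw [List.mem_cons, not_or] at hax
    simpa [pad, Ne.symm hax.1] using ih hax.2 (r := rs) (by simpa using hr)

end Padding

section Separated

variable {α : Type*} [DecidableEq α] {a : α}

theorem List.filter_ne_cons_self (S : List α) :
    (a :: S).filter (· ≠ a) = S.filter (· ≠ a) := by
  simp

theorem List.filter_ne_cons_of_ne {s : α} (hs : s ≠ a) (S : List α) :
    (s :: S).filter (· ≠ a) = s :: S.filter (· ≠ a) := by
  simp [hs]

variable (a)

theorem levenshtein_filter_cons_cons_le (s t : α) (S T : List α) :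
    (lev ((s :: S).filter (· ≠ a)) ((t :: T).filter (· ≠ a)) : ℝ) ≤
      lev (S.filter (· ≠ a)) (T.filter (· ≠ a)) + if s = t then 0 else 1 := by
  by_cases hs : s = a <;> by_cases ht : t = a
  · subst s t
    rw [List.filter_ne_cons_self, List.filter_ne_cons_self, if_pos rfl, add_zero]
  · subst s
    rw [List.filter_ne_cons_self, List.filter_ne_cons_of_ne ht, if_neg (Ne.symm ht)]
    exact_mod_cast levenshtein_cons_right_le _ _ _
  · subst t
    rw [List.filter_ne_cons_self, List.filter_ne_cons_of_ne hs, if_neg hs]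
    exact_mod_cast levenshtein_cons_left_le _ _ _
  · rw [List.filter_ne_cons_of_ne hs, List.filter_ne_cons_of_ne ht]
    exact_mod_cast levenshtein_cons_cons_le _ _ _ _

theorem levenshtein_filter_cons_left_le {s t : α} (h : s = a ∨ t = a) (S Z : List α) :
    (lev ((s :: S).filter (· ≠ a)) Z : ℝ) ≤
      lev (S.filter (· ≠ a)) Z + if s = t then 0 else 1 := by
  by_cases hs : s = a
  · subst s
    rw [List.filter_ne_cons_self]
    split_ifs <;> linarith
  · rw [List.filter_ne_cons_of_ne hs, if_neg (h.resolve_left hs ▸ hs)]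
    exact_mod_cast levenshtein_cons_left_le _ _ _

theorem levenshtein_filter_cons_right_le {s t : α} (h : s = a ∨ t = a) (Z T : List α) :
    (lev Z ((t :: T).filter (· ≠ a)) : ℝ) ≤
      lev Z (T.filter (· ≠ a)) + if s = t then 0 else 1 := by
  by_cases ht : t = a
  · subst t
    rw [List.filter_ne_cons_self]
    split_ifs <;> linarith
  · rw [List.filter_ne_cons_of_ne ht, if_neg (h.resolve_right ht ▸ Ne.symm ht)]
    exact_mod_cast levenshtein_cons_right_le _ _ _

variable {a} {d : α → α → ℝ}

mutual

theorem levenshtein_filter_le_dtwd (hd : ∀ s t, (if s = t then 0 else 1 : ℝ) ≤ d s t)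
    (s : α) (S : List α) (t : α) (T : List α)
    (hS : SeparatedBy a (s :: S)) (hT : SeparatedBy a (t :: T)) :
    (lev ((s :: S).filter (· ≠ a)) ((t :: T).filter (· ≠ a)) : ℝ) ≤
      dtwd d (s :: S) (t :: T) := by
  have hst := hd s t
  apply le_dtwd_cons_cons
  · rintro rfl rfl
    have := levenshtein_filter_cons_cons_le a s t [] []
    simp only [List.filter_nil, levenshtein_nil_nil, Nat.cast_zero, zero_add] at this
    linarith
  · intro hS₀
    obtain ⟨s', S', rfl⟩ := List.exists_cons_of_ne_nil hS₀
    by_cases h : s = a ∨ t = a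
    · have := levenshtein_filter_le_dtwd hd s' S' t T hS.tail hT
      linarith [levenshtein_filter_cons_left_le a h (s' :: S') ((t :: T).filter (· ≠ a))]
    · push Not at h
      have hs' : s' = a := (List.isChain_cons_cons.1 hS).1.resolve_left h.1
      subst s'
      have := levenshtein_filter_le_dtwd_sep_left hd S' h.2 T hS.tail hT
      linarith [levenshtein_filter_cons_cons_le a s t (a :: S') T]
  · intro hT₀
    obtain ⟨t', T', rfl⟩ := List.exists_cons_of_ne_nil hT₀
    by_cases h : s = a ∨ t = a
    · have := levenshtein_filter_le_dtwd hd s S t' T' hS hT.tail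
      linarith [levenshtein_filter_cons_right_le a h ((s :: S).filter (· ≠ a)) (t' :: T')]
    · push Not at h
      have ht' : t' = a := (List.isChain_cons_cons.1 hT).1.resolve_left h.2
      subst t'
      have := levenshtein_filter_le_dtwd_sep_right hd S h.1 T' hS hT.tail
      linarith [levenshtein_filter_cons_cons_le a s t S (a :: T')]
  · intro hS₀ hT₀
    obtain ⟨s', S', rfl⟩ := List.exists_cons_of_ne_nil hS₀
    obtain ⟨t', T', rfl⟩ := List.exists_cons_of_ne_nil hT₀
    have := levenshtein_filter_le_dtwd hd s' S' t' T' hS.tail hT.tail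
    linarith [levenshtein_filter_cons_cons_le a s t (s' :: S') (t' :: T')]
termination_by S.length + T.length + 2

theorem levenshtein_filter_le_dtwd_sep_left
    (hd : ∀ s t, (if s = t then 0 else 1 : ℝ) ≤ d s t)
    (S : List α) {t : α} (ht : t ≠ a) (T : List α)
    (hS : SeparatedBy a (a :: S)) (hT : SeparatedBy a (t :: T)) :
    (lev ((a :: S).filter (· ≠ a)) (T.filter (· ≠ a)) : ℝ) ≤
      dtwd d (a :: S) (t :: T) := by
  have hat : 1 ≤ d a t := by simpa [Ne.symm ht] using hd a t
  apply le_dtwd_cons_cons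
  · rintro rfl rfl
    simp only [List.filter_nil, List.filter_ne_cons_self, levenshtein_nil_nil, Nat.cast_zero]
    linarith
  · intro hS₀
    obtain ⟨s', S', rfl⟩ := List.exists_cons_of_ne_nil hS₀
    have ih := levenshtein_filter_le_dtwd hd s' S' t T hS.tail hT
    rw [List.filter_ne_cons_of_ne ht] at ih
    have hdrop := Nat.cast_le (α := ℝ) |>.2 <|
      levenshtein_le_cons_right t ((s' :: S').filter (· ≠ a)) (T.filter (· ≠ a))
    push_cast at hdrop
    rw [List.filter_ne_cons_self]
    linarith
  · intro hT₀
    obtain ⟨t', T', rfl⟩ := List.exists_cons_of_ne_nil hT₀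
    have := levenshtein_filter_le_dtwd hd a S t' T' hS hT.tail
    linarith
  · intro hS₀ hT₀
    obtain ⟨s', S', rfl⟩ := List.exists_cons_of_ne_nil hS₀
    obtain ⟨t', T', rfl⟩ := List.exists_cons_of_ne_nil hT₀
    have := levenshtein_filter_le_dtwd hd s' S' t' T' hS.tail hT.tail
    rw [List.filter_ne_cons_self]
    linarith
termination_by S.length + T.length + 2

theorem levenshtein_filter_le_dtwd_sep_right
    (hd : ∀ s t, (if s = t then 0 else 1 : ℝ) ≤ d s t)
    (S : List α) {s : α} (hs : s ≠ a) (T : List α)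
    (hS : SeparatedBy a (s :: S)) (hT : SeparatedBy a (a :: T)) :
    (lev (S.filter (· ≠ a)) ((a :: T).filter (· ≠ a)) : ℝ) ≤
      dtwd d (s :: S) (a :: T) := by
  have hsa : 1 ≤ d s a := by simpa [hs] using hd s a
  apply le_dtwd_cons_cons
  · rintro rfl rfl
    simp only [List.filter_nil, List.filter_ne_cons_self, levenshtein_nil_nil, Nat.cast_zero]
    linarith
  · intro hS₀
    obtain ⟨s', S', rfl⟩ := List.exists_cons_of_ne_nil hS₀
    have := levenshtein_filter_le_dtwd hd s' S' a T hS.tail hT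
    linarith
  · intro hT₀
    obtain ⟨t', T', rfl⟩ := List.exists_cons_of_ne_nil hT₀
    have ih := levenshtein_filter_le_dtwd hd s S t' T' hS hT.tail
    rw [List.filter_ne_cons_of_ne hs] at ih
    have hdrop := Nat.cast_le (α := ℝ) |>.2 <|
      levenshtein_le_cons_left s (S.filter (· ≠ a)) ((t' :: T').filter (· ≠ a))
    push_cast at hdrop
    rw [List.filter_ne_cons_self]
    linarith
  · intro hS₀ hT₀
    obtain ⟨s', S', rfl⟩ := List.exists_cons_of_ne_nil hS₀
    obtain ⟨t', T', rfl⟩ := List.exists_cons_of_ne_nil hT₀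
    have := levenshtein_filter_le_dtwd hd s' S' t' T' hS.tail hT.tail
    rw [List.filter_ne_cons_self]
    linarith
termination_by S.length + T.length + 2

end

end Separated

/-- the unit-cost edit distance between `x` and `y` is at most the
dynamic time warping distance (0/1 point distance) between the padded sequences
`A(x)` and `A(y)`, for any positive padding multiplicities and any symbol `a`
not occurring in `x` or `y`. -/
theorem edit_le_dtwd_padded {α : Type*} [DecidableEq α] (a : α) (x y : List α)
    (hax : a ∉ x) (hay : a ∉ y) (r₁ r₂ : List ℕ)
    (hr₁ : r₁.length = x.length + 1) (hr₂ : r₂.length = y.length + 1)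
    (hp₁ : ∀ m ∈ r₁, 0 < m) (hp₂ : ∀ m ∈ r₂, 0 < m) :
    ((levenshtein Levenshtein.defaultCost x y : ℕ) : ℝ) ≤
      dtwd (fun s t => if s = t then 0 else 1) (pad a x r₁) (pad a y r₂) := by
  obtain ⟨m, rs, rfl⟩ := List.exists_cons_of_length_eq_add_one hr₁
  obtain ⟨n, ts, rfl⟩ := List.exists_cons_of_length_eq_add_one hr₂
  obtain ⟨m, rfl⟩ := Nat.exists_eq_add_one_of_ne_zero (hp₁ m List.mem_cons_self).ne'
  obtain ⟨n, rfl⟩ := Nat.exists_eq_add_one_of_ne_zero (hp₂ n List.mem_cons_self).ne'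
  have hx := separatedBy_pad a x hp₁
  have hy := separatedBy_pad a y hp₂
  conv_lhs => rw [← filter_ne_pad a hax hr₁, ← filter_ne_pad a hay hr₂]
  simp only [pad_succ] at hx hy ⊢
  exact levenshtein_filter_le_dtwd (fun _ _ => le_rfl) a _ a _ hx hy
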